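/- arXiv:1605.01703 — 3 statements merged into one kernel-verified Lean document; each statement's English description precedes it below -/
import Mathlib

section
/- Let n ≥ 2 and let y : Fin n → ℝ be data with nonzero total variance (∑ᵢ (yᵢ - ȳ)² ≠ 0, where ȳ = (1/n)∑ⱼ yⱼ), and let ŷ : Fin n → ℝ be any predictions. Define R² = 1 - (∑ᵢ (yᵢ - ŷᵢ)²)/(∑ᵢ (yᵢ - ȳ)²), the leave-one-out cross-validated score R²_cv = 1 - (∑ᵢ (yᵢ - ŷᵢ)²)/(∑ᵢ (yᵢ - ȳᵢ)²) with ȳᵢ = (1/(n-1))∑_{j≠i} yⱼ, and R²_naive = 1 - (n/(n-1))². Then R²_cv = (R² - R²_naive)/(1 - R²_naive). -/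
/-! Leaving out the point `i` moves the mean away from `yᵢ`, and exactly proportionally:
`yᵢ - ȳᵢ = n/(n-1) · (yᵢ - ȳ)`. So the cross-validated denominator is the ordinary one scaled
by `k = (n/(n-1))²`, and `R²_naive = 1 - k`; the claimed formula is then the identity
`1 - x/k = ((1 - x) - (1 - k)) / (1 - (1 - k))`. -/

open Finset

section LeaveOneOut

variable {ι : Type*} [DecidableEq ι] (s : Finset ι) (y : ι → ℝ)

theorem sub_looMean_eq_mul_sub_mean (hs : 1 < #s) {i : ι} (hi : i ∈ s) :
    y i - 1 / ((#s : ℝ) - 1) * ∑ j ∈ s.erase i, y j =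
      (#s : ℝ) / (#s - 1) * (y i - 1 / #s * ∑ j ∈ s, y j) := by
  have hs' : (1 : ℝ) < #s := by exact_mod_cast hs
  rw [sum_erase_eq_sub hi]
  field_simp [sub_ne_zero.mpr hs'.ne']
  ring

theorem sum_sq_sub_looMean (hs : 1 < #s) :
    ∑ i ∈ s, (y i - 1 / ((#s : ℝ) - 1) * ∑ j ∈ s.erase i, y j) ^ 2 =
      ((#s : ℝ) / (#s - 1)) ^ 2 * ∑ i ∈ s, (y i - 1 / #s * ∑ j ∈ s, y j) ^ 2 := by
  rw [mul_sum]
  refine sum_congr rfl fun i hi => ?_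
  rw [sub_looMean_eq_mul_sub_mean s y hs hi, mul_pow]

end LeaveOneOut

theorem one_sub_div_eq_sub_div_sub {K : Type*} [Field K] {k : K} (hk : k ≠ 0) (x : K) :
    1 - x / k = ((1 - x) - (1 - k)) / (1 - (1 - k)) := by
  rw [sub_sub_sub_cancel_left, sub_sub_cancel, sub_div, div_self hk]

theorem r2_cv_adjustment_general (n : ℕ) (hn : 2 ≤ n) (y yhat : Fin n → ℝ)
    (ybar : ℝ) (hybar : ybar = (1 / (n : ℝ)) * ∑ j, y j)
    (yloo : Fin n → ℝ)
    (hyloo : ∀ i, yloo i = (1 / ((n : ℝ) - 1)) * ∑ j ∈ Finset.univ.erase i, y j) :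
    1 - (∑ i, (y i - yhat i) ^ 2) / (∑ i, (y i - yloo i) ^ 2) =
      ((1 - (∑ i, (y i - yhat i) ^ 2) / (∑ i, (y i - ybar) ^ 2))
          - (1 - ((n : ℝ) / ((n : ℝ) - 1)) ^ 2))
        / (1 - (1 - ((n : ℝ) / ((n : ℝ) - 1)) ^ 2)) := by
  have hloo : ∑ i, (y i - yloo i) ^ 2 = ((n : ℝ) / (n - 1)) ^ 2 * ∑ i, (y i - ybar) ^ 2 := by
    simpa [hybar, hyloo] using sum_sq_sub_looMean univ y (by rwa [card_univ, Fintype.card_fin])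
  have hk : ((n : ℝ) / (n - 1)) ^ 2 ≠ 0 := by
    have : (1 : ℝ) < n := by exact_mod_cast hn
    exact pow_ne_zero 2 (div_ne_zero (by positivity) (by linarith))
  rw [hloo, mul_comm, ← div_div]
  exact one_sub_div_eq_sub_div_sub hk _

/-- For `n ≥ 2`, data `y` with nonzero total variance, and any
predictions `yhat`, the leave-one-out cross-validated score `R²_cv` equals
`(R² - R²_naive) / (1 - R²_naive)` where `R²_naive = 1 - (n/(n-1))²`. -/
theorem r2_cv_adjustment (n : ℕ) (hn : 2 ≤ n) (y yhat : Fin n → ℝ)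
    (ybar : ℝ) (hybar : ybar = (1 / (n : ℝ)) * ∑ j, y j)
    (yloo : Fin n → ℝ)
    (hyloo : ∀ i, yloo i = (1 / ((n : ℝ) - 1)) * ∑ j ∈ Finset.univ.erase i, y j)
    (hB : ∑ i, (y i - ybar) ^ 2 ≠ 0) :
    1 - (∑ i, (y i - yhat i) ^ 2) / (∑ i, (y i - yloo i) ^ 2) =
      ((1 - (∑ i, (y i - yhat i) ^ 2) / (∑ i, (y i - ybar) ^ 2))
          - (1 - ((n : ℝ) / ((n : ℝ) - 1)) ^ 2))
        / (1 - (1 - ((n : ℝ) / ((n : ℝ) - 1)) ^ 2)) :=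
  r2_cv_adjustment_general n hn y yhat ybar hybar yloo hyloo
end

section
/- Let n ≥ 2 and let y : Fin n → ℝ satisfy ∑ᵢ (yᵢ - ȳ)² ≠ 0, where ȳ = (1/n)∑ⱼ yⱼ. Define the leave-one-out means ȳᵢ = (1/(n-1))∑_{j≠i} yⱼ. Then the score of the naive leave-one-out predictor, R²_naive = 1 - (∑ᵢ (yᵢ - ȳᵢ)²)/(∑ᵢ (yᵢ - ȳ)²), equals 1 - n²/(n-1)²; in particular it depends only on n, not on the data values y. -/
/-! Since `∑_{j ≠ i} y j = n ȳ - y i`, each leave-one-out residual is a fixed multiple of the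
ordinary residual: `y i - ȳᵢ = n / (n - 1) · (y i - ȳ)`. Hence the residual sum of squares is
`(n / (n - 1))²` times the total sum of squares, and the ratio in `R²` is `n² / (n - 1)²`. -/

theorem sub_mean_erase_eq_mul_sub_mean {ι : Type*} [Fintype ι] [DecidableEq ι] (y : ι → ℝ)
    (i : ι) (hcard : 1 < Fintype.card ι) :
    y i - 1 / ((Fintype.card ι : ℝ) - 1) * ∑ j ∈ Finset.univ.erase i, y j =
      Fintype.card ι / ((Fintype.card ι : ℝ) - 1) *
        (y i - 1 / (Fintype.card ι : ℝ) * ∑ j, y j) := by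
  have hcard' : (1 : ℝ) < Fintype.card ι := by exact_mod_cast hcard
  have hn0 : (Fintype.card ι : ℝ) ≠ 0 := by positivity
  have hn1 : (Fintype.card ι : ℝ) - 1 ≠ 0 := by linarith
  rw [Finset.sum_erase_eq_sub (Finset.mem_univ i)]
  field_simp
  ring

/-- For `n ≥ 2` and data `y` with nonzero total variance, the
R² score of the naive leave-one-out predictor equals `1 - n²/(n-1)²`,
depending only on `n`. -/
theorem r2_naive_value (n : ℕ) (hn : 2 ≤ n) (y : Fin n → ℝ)
    (ybar : ℝ) (hybar : ybar = (1 / (n : ℝ)) * ∑ j, y j)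
    (yloo : Fin n → ℝ)
    (hyloo : ∀ i, yloo i = (1 / ((n : ℝ) - 1)) * ∑ j ∈ Finset.univ.erase i, y j)
    (hB : ∑ i, (y i - ybar) ^ 2 ≠ 0) :
    1 - (∑ i, (y i - yloo i) ^ 2) / (∑ i, (y i - ybar) ^ 2) =
      1 - (n : ℝ) ^ 2 / ((n : ℝ) - 1) ^ 2 := by
  have hresidual : ∀ i, y i - yloo i = n / ((n : ℝ) - 1) * (y i - ybar) := fun i => by
    simpa [hyloo, hybar] using sub_mean_erase_eq_mul_sub_mean y i (by rw [Fintype.card_fin]; omega)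
  have hRSS : ∑ i, (y i - yloo i) ^ 2 = (n / ((n : ℝ) - 1)) ^ 2 * ∑ i, (y i - ybar) ^ 2 := by
    simp_rw [hresidual, mul_pow, ← Finset.mul_sum]
  rw [hRSS, mul_div_cancel_right₀ _ hB, div_pow]
end

section
/- Let n ≥ 2 and y : Fin n → ℝ. With ȳ = (1/n)∑ⱼ yⱼ and ȳᵢ = (1/(n-1))∑_{j≠i} yⱼ, one has ∑ᵢ (yᵢ - ȳᵢ)² = (n/(n-1))² · ∑ᵢ (yᵢ - ȳ)². -/
/-!
Removing `yᵢ` from the total moves the mean away from `yᵢ`: each leave-one-out residual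
`yᵢ - ȳᵢ` is the ordinary residual `yᵢ - ȳ` scaled by `n / (n - 1)`. Squaring and summing gives
the identity.
-/

open Finset

theorem sub_mul_sum_erase_eq {ι K : Type*} [DecidableEq ι] [Field K] {s : Finset ι} {i : ι}
    (hi : i ∈ s) (y : ι → K) (hs : (#s : K) ≠ 0) (hs₁ : (#s : K) - 1 ≠ 0) :
    y i - 1 / ((#s : K) - 1) * ∑ j ∈ s.erase i, y j =
      (#s : K) / ((#s : K) - 1) * (y i - 1 / (#s : K) * ∑ j ∈ s, y j) := by
  rw [sum_erase_eq_sub hi]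
  field_simp
  ring

/-- For `n ≥ 2` and any data `y`,
`∑ᵢ (yᵢ - ȳᵢ)² = (n/(n-1))² · ∑ᵢ (yᵢ - ȳ)²`. -/
theorem loo_sum_sq_eq (n : ℕ) (hn : 2 ≤ n) (y : Fin n → ℝ)
    (ybar : ℝ) (hybar : ybar = (1 / (n : ℝ)) * ∑ j, y j)
    (yloo : Fin n → ℝ)
    (hyloo : ∀ i, yloo i = (1 / ((n : ℝ) - 1)) * ∑ j ∈ Finset.univ.erase i, y j) :
    ∑ i, (y i - yloo i) ^ 2 =
      ((n : ℝ) / ((n : ℝ) - 1)) ^ 2 * ∑ i, (y i - ybar) ^ 2 := by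
  have hn' : (2 : ℝ) ≤ n := by exact_mod_cast hn
  have hcard : (#(univ : Finset (Fin n)) : ℝ) = n := by simp
  have hresid (i : Fin n) : y i - yloo i = (n : ℝ) / ((n : ℝ) - 1) * (y i - ybar) := by
    rw [hyloo, hybar, ← hcard]
    exact sub_mul_sum_erase_eq (mem_univ i) y (by rw [hcard]; positivity)
      (by rw [hcard]; linarith)
  simp_rw [hresid, mul_pow, ← mul_sum]
end
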